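/- arXiv:1611.09615 — 3 statements merged into one kernel-verified Lean document; each statement's English description precedes it below -/
import Mathlib

section
/- For fixed x > 0 and k > 0, the wake-plane integral ∫_{ℝ²} ∂χ/∂x dy dz = 0, where χ(x,y,z) = e^{-k(r-x)}/r with r = sqrt(x²+y²+z²). -/
open MeasureTheory Real Set Filter Topology


-- derivative of χ in a, at a = x, with c = y² + z² ≥ 0
lemma aux_hasDeriv (k x c : ℝ) (hx : 0 < x) (hc : 0 ≤ c) :
    HasDerivAt (fun a => Real.exp (-(k * (Real.sqrt (a ^ 2 + c) - a))) / Real.sqrt (a ^ 2 + c))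
      (Real.exp (-(k * (Real.sqrt (x ^ 2 + c) - x))) *
        (k * (Real.sqrt (x ^ 2 + c) - x) - x / Real.sqrt (x ^ 2 + c)) / (x ^ 2 + c)) x := by
  have hpos : (0:ℝ) < x ^ 2 + c := by positivity
  set u := Real.sqrt (x ^ 2 + c) with hu_def
  have hu : 0 < u := Real.sqrt_pos.2 hpos
  have hu2 : u ^ 2 = x ^ 2 + c := Real.sq_sqrt hpos.le
  have hs : HasDerivAt (fun a : ℝ => a ^ 2 + c) (2 * x) x := by
    simpa using (hasDerivAt_pow 2 x).add_const c
  have hsq : HasDerivAt (fun a : ℝ => Real.sqrt (a ^ 2 + c)) (x / u) x := by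
    have := (Real.hasDerivAt_sqrt hpos.ne').comp x hs
    refine this.congr_deriv ?_
    field_simp
    ring
  have hinner : HasDerivAt (fun a : ℝ => -(k * (Real.sqrt (a ^ 2 + c) - a)))
      (-(k * (x / u - 1))) x := ((hsq.sub (hasDerivAt_id x)).const_mul k).neg
  have hexp : HasDerivAt (fun a : ℝ => Real.exp (-(k * (Real.sqrt (a ^ 2 + c) - a))))
      (Real.exp (-(k * (u - x))) * (-(k * (x / u - 1)))) x := hinner.exp
  have hdiv := hexp.div hsq hu.ne'
  refine hdiv.congr_deriv ?_
  simp only [Pi.mul_apply, ← hu_def]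
  rw [← hu2]
  field_simp
  ring

-- antiderivative H and its derivative in ρ
lemma aux_H_deriv (k x ρ : ℝ) (hx : 0 < x) :
    HasDerivAt (fun ρ : ℝ => -(Real.exp (-(k * (Real.sqrt (x ^ 2 + ρ ^ 2) - x))) *
        (Real.sqrt (x ^ 2 + ρ ^ 2) - x) / Real.sqrt (x ^ 2 + ρ ^ 2)))
      (ρ * (Real.exp (-(k * (Real.sqrt (x ^ 2 + ρ ^ 2) - x))) *
        (k * (Real.sqrt (x ^ 2 + ρ ^ 2) - x) - x / Real.sqrt (x ^ 2 + ρ ^ 2)) /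
          (x ^ 2 + ρ ^ 2))) ρ := by
  have hpos : (0:ℝ) < x ^ 2 + ρ ^ 2 := by positivity
  set u := Real.sqrt (x ^ 2 + ρ ^ 2) with hu_def
  have hu : 0 < u := Real.sqrt_pos.2 hpos
  have hu2 : u ^ 2 = x ^ 2 + ρ ^ 2 := Real.sq_sqrt hpos.le
  have hs : HasDerivAt (fun t : ℝ => x ^ 2 + t ^ 2) (2 * ρ) ρ := by
    simpa using ((hasDerivAt_pow 2 ρ).const_add (x ^ 2))
  have hsq : HasDerivAt (fun t : ℝ => Real.sqrt (x ^ 2 + t ^ 2)) (ρ / u) ρ := by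
    have := (Real.hasDerivAt_sqrt hpos.ne').comp ρ hs
    refine this.congr_deriv ?_
    field_simp
    ring
  have hw : HasDerivAt (fun t : ℝ => Real.sqrt (x ^ 2 + t ^ 2) - x) (ρ / u) ρ :=
    hsq.sub_const x
  have hexp : HasDerivAt (fun t : ℝ => Real.exp (-(k * (Real.sqrt (x ^ 2 + t ^ 2) - x))))
      (Real.exp (-(k * (u - x))) * (-(k * (ρ / u)))) ρ := ((hw.const_mul k).neg).exp
  have hnum := hexp.mul hw
  have hdiv := hnum.div hsq hu.ne'
  have := hdiv.neg
  refine this.congr_deriv ?_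
  simp only [Pi.mul_apply, ← hu_def]
  rw [← hu2]
  field_simp
  ring

noncomputable def Gfun (k x c : ℝ) : ℝ :=
  Real.exp (-(k * (Real.sqrt (x ^ 2 + c) - x))) *
    (k * (Real.sqrt (x ^ 2 + c) - x) - x / Real.sqrt (x ^ 2 + c)) / (x ^ 2 + c)

noncomputable def Hfun (k x ρ : ℝ) : ℝ :=
  -(Real.exp (-(k * (Real.sqrt (x ^ 2 + ρ ^ 2) - x))) *
      (Real.sqrt (x ^ 2 + ρ ^ 2) - x) / Real.sqrt (x ^ 2 + ρ ^ 2))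

lemma aux_bound (k x r : ℝ) (hk : 0 < k) (hx : 0 < x) (hr : 0 ≤ r) :
    |r * Gfun k x (r ^ 2)| ≤ 2 / x * Real.exp (k * x / 2) * Real.exp (-(k / 2) * r) := by
  unfold Gfun
  have hpos : (0:ℝ) < x ^ 2 + r ^ 2 := by positivity
  set u := Real.sqrt (x ^ 2 + r ^ 2) with hu_def
  have hu : 0 < u := Real.sqrt_pos.2 hpos
  have hu2 : u ^ 2 = x ^ 2 + r ^ 2 := Real.sq_sqrt hpos.le
  have hux : x ≤ u := by
    rw [← Real.sqrt_sq hx.le]; exact Real.sqrt_le_sqrt (by nlinarith)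
  have hur : r ≤ u := by
    rw [← Real.sqrt_sq hr]; exact Real.sqrt_le_sqrt (by nlinarith)
  set E := Real.exp (-(k * (u - x))) with hE_def
  have hE : 0 < E := Real.exp_pos _
  rw [← hu2]
  have h1 : |r * (E * (k * (u - x) - x / u) / u ^ 2)| =
      r * E * |k * (u - x) - x / u| / u ^ 2 := by
    rw [abs_mul, abs_div, abs_mul, abs_of_nonneg hr, abs_of_nonneg hE.le,
      abs_of_nonneg (by positivity : (0:ℝ) ≤ u ^ 2)]
    ring
  rw [h1]
  have hw0 : 0 ≤ u - x := by linarith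
  have h2 : |k * (u - x) - x / u| ≤ k * (u - x) + 1 := by
    have h3 := abs_sub (k * (u - x)) (x / u)
    have e1 : |k * (u - x)| = k * (u - x) := abs_of_nonneg (by positivity)
    have e2 : |x / u| ≤ 1 := by
      rw [abs_of_nonneg (by positivity)]
      rw [div_le_one hu]; exact hux
    linarith
  calc r * E * |k * (u - x) - x / u| / u ^ 2
      ≤ r * E * (k * (u - x) + 1) / u ^ 2 := by gcongr
    _ = (r / u ^ 2) * (E * (k * (u - x) + 1)) := by ring
    _ ≤ (1 / x) * (2 * Real.exp (k * x / 2) * Real.exp (-(k / 2) * r)) := by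
        apply mul_le_mul ?_ ?_ (by positivity) (by positivity)
        · have hA1 : r / u ^ 2 ≤ 1 / u := by
            rw [div_le_div_iff₀ (by positivity) hu]; nlinarith
          have hA2 : 1 / u ≤ 1 / x := one_div_le_one_div_of_le hx hux
          linarith
        · have hb1 : k * (u - x) + 1 ≤ 2 * Real.exp (k * (u - x) / 2) := by
            have := Real.add_one_le_exp (k * (u - x) / 2)
            nlinarith [Real.exp_pos (k * (u - x) / 2)]
          have hb2 : E * (2 * Real.exp (k * (u - x) / 2)) =
              2 * Real.exp (-(k * (u - x) / 2)) := by
            rw [hE_def, show Real.exp (-(k * (u - x))) * (2 * Real.exp (k * (u - x) / 2)) =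
              2 * (Real.exp (-(k * (u - x))) * Real.exp (k * (u - x) / 2)) from by ring,
              ← Real.exp_add, show -(k * (u - x)) + k * (u - x) / 2 = -(k * (u - x) / 2) from by ring]
          have hb3 : Real.exp (-(k * (u - x) / 2)) ≤
              Real.exp (k * x / 2) * Real.exp (-(k / 2) * r) := by
            rw [← Real.exp_add]
            apply Real.exp_le_exp.2
            have h4 : r - x ≤ u - x := by linarith
            nlinarith [mul_le_mul_of_nonneg_left h4 hk.le]
          calc E * (k * (u - x) + 1) ≤ E * (2 * Real.exp (k * (u - x) / 2)) :=
                mul_le_mul_of_nonneg_left hb1 hE.le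
            _ = 2 * Real.exp (-(k * (u - x) / 2)) := hb2
            _ ≤ 2 * (Real.exp (k * x / 2) * Real.exp (-(k / 2) * r)) := by linarith
            _ = 2 * Real.exp (k * x / 2) * Real.exp (-(k / 2) * r) := by ring
    _ = 2 / x * Real.exp (k * x / 2) * Real.exp (-(k / 2) * r) := by ring

lemma aux_cont (k x : ℝ) (hx : 0 < x) : Continuous (Hfun k x) := by
  unfold Hfun
  have hpos : ∀ ρ : ℝ, (0:ℝ) < x ^ 2 + ρ ^ 2 := fun ρ => by positivity
  have hcu : Continuous fun ρ : ℝ => Real.sqrt (x ^ 2 + ρ ^ 2) :=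
    (continuous_const.add (continuous_pow 2)).sqrt
  have hne : ∀ ρ : ℝ, Real.sqrt (x ^ 2 + ρ ^ 2) ≠ 0 :=
    fun ρ => (Real.sqrt_pos.2 (hpos ρ)).ne'
  exact (((((continuous_const.mul (hcu.sub continuous_const)).neg).rexp).mul
    (hcu.sub continuous_const)).div hcu hne).neg

lemma aux_tendsto (k x : ℝ) (hk : 0 < k) (hx : 0 < x) :
    Tendsto (Hfun k x) atTop (𝓝 0) := by
  have huT : Tendsto (fun ρ : ℝ => Real.sqrt (x ^ 2 + ρ ^ 2)) atTop atTop := by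
    apply tendsto_atTop_mono' atTop ?_ tendsto_id
    filter_upwards [eventually_ge_atTop (0:ℝ)] with ρ hρ
    calc (id ρ : ℝ) = Real.sqrt (ρ ^ 2) := (Real.sqrt_sq hρ).symm
      _ ≤ Real.sqrt (x ^ 2 + ρ ^ 2) := Real.sqrt_le_sqrt (by nlinarith)
  have hwT : Tendsto (fun ρ : ℝ => Real.sqrt (x ^ 2 + ρ ^ 2) - x) atTop atTop := by
    simpa [sub_eq_add_neg] using tendsto_atTop_add_const_right atTop (-x) huT
  have hA : Tendsto (fun t : ℝ => t * Real.exp (-(k * t))) atTop (𝓝 0) := by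
    simpa [neg_mul] using tendsto_rpow_mul_exp_neg_mul_atTop_nhds_zero 1 k hk
  have hB := hA.comp hwT
  have hC : Tendsto (fun ρ : ℝ => (Real.sqrt (x ^ 2 + ρ ^ 2))⁻¹) atTop (𝓝 0) :=
    huT.inv_tendsto_atTop
  have hD := (hB.mul hC).neg
  rw [zero_mul, neg_zero] at hD
  refine hD.congr fun ρ => ?_
  unfold Hfun
  simp only [Function.comp]
  rw [div_eq_mul_inv]
  ring

lemma key_integral (k x : ℝ) (hk : 0 < k) (hx : 0 < x) :
    ∫ r in Ioi (0:ℝ), r * Gfun k x (r ^ 2) = 0 := by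
  have hderiv : ∀ r ∈ Ioi (0:ℝ), HasDerivAt (Hfun k x) (r * Gfun k x (r ^ 2)) r := by
    intro r _
    unfold Hfun Gfun
    exact aux_H_deriv k x r hx
  have hcont : ContinuousWithinAt (Hfun k x) (Ici 0) 0 :=
    (aux_cont k x hx).continuousWithinAt
  have hint : IntegrableOn (fun r => r * Gfun k x (r ^ 2)) (Ioi (0:ℝ)) := by
    have hintC : IntegrableOn
        (fun r => 2 / x * Real.exp (k * x / 2) * Real.exp (-(k / 2) * r)) (Ioi (0:ℝ)) :=
      (exp_neg_integrableOn_Ioi 0 (by positivity : (0:ℝ) < k / 2)).const_mul _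
    have hmeas : AEStronglyMeasurable (fun r => r * Gfun k x (r ^ 2))
        (volume.restrict (Ioi (0:ℝ))) := by
      have hcu : Continuous fun r : ℝ => Real.sqrt (x ^ 2 + r ^ 2) :=
        (continuous_const.add (continuous_pow 2)).sqrt
      have hne : ∀ r : ℝ, Real.sqrt (x ^ 2 + r ^ 2) ≠ 0 :=
        fun r => (Real.sqrt_pos.2 (by positivity)).ne'
      have hne2 : ∀ r : ℝ, x ^ 2 + r ^ 2 ≠ 0 := fun r => by positivity
      have : Continuous fun r : ℝ => r * Gfun k x (r ^ 2) := by
        unfold Gfun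
        exact continuous_id.mul ((((continuous_const.mul (hcu.sub continuous_const)).neg.rexp).mul
          ((continuous_const.mul (hcu.sub continuous_const)).sub
            (continuous_const.div hcu hne))).div
          (continuous_const.add (continuous_pow 2)) hne2)
      exact this.aestronglyMeasurable
    refine MeasureTheory.Integrable.mono hintC hmeas ?_
    filter_upwards [ae_restrict_mem measurableSet_Ioi] with r hr
    rw [Real.norm_eq_abs, Real.norm_eq_abs]
    calc |r * Gfun k x (r ^ 2)| ≤ 2 / x * Real.exp (k * x / 2) * Real.exp (-(k / 2) * r) :=
          aux_bound k x r hk hx (le_of_lt hr)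
      _ ≤ |2 / x * Real.exp (k * x / 2) * Real.exp (-(k / 2) * r)| := le_abs_self _
  have h := integral_Ioi_of_hasDerivAt_of_tendsto hcont hderiv hint (aux_tendsto k x hk hx)
  rw [h]
  unfold Hfun
  simp [Real.sqrt_sq hx.le]

/-- For fixed `x > 0` and `k > 0`, the wake-plane integral
`∫_{ℝ²} ∂χ/∂x dy dz = 0`, where `χ(x,y,z) = e^{-k(r-x)}/r`, `r = √(x²+y²+z²)`. -/
theorem statement3 (k x : ℝ) (hk : 0 < k) (hx : 0 < x) :
    (∫ p : ℝ × ℝ,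
        deriv (fun a =>
          Real.exp (-(k * (Real.sqrt (a ^ 2 + p.1 ^ 2 + p.2 ^ 2) - a))) /
            Real.sqrt (a ^ 2 + p.1 ^ 2 + p.2 ^ 2)) x) = 0 := by
  have h1 : ∀ p : ℝ × ℝ,
      deriv (fun a =>
        Real.exp (-(k * (Real.sqrt (a ^ 2 + p.1 ^ 2 + p.2 ^ 2) - a))) /
          Real.sqrt (a ^ 2 + p.1 ^ 2 + p.2 ^ 2)) x = Gfun k x (p.1 ^ 2 + p.2 ^ 2) := by
    intro p
    have he : (fun a : ℝ =>
        Real.exp (-(k * (Real.sqrt (a ^ 2 + p.1 ^ 2 + p.2 ^ 2) - a))) /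
          Real.sqrt (a ^ 2 + p.1 ^ 2 + p.2 ^ 2)) = (fun a : ℝ =>
        Real.exp (-(k * (Real.sqrt (a ^ 2 + (p.1 ^ 2 + p.2 ^ 2)) - a))) /
          Real.sqrt (a ^ 2 + (p.1 ^ 2 + p.2 ^ 2))) := by
      funext a; rw [add_assoc]
    rw [he]
    have := (aux_hasDeriv k x (p.1 ^ 2 + p.2 ^ 2) hx (by positivity)).deriv
    rw [this]
    unfold Gfun
    rfl
  rw [show (∫ p : ℝ × ℝ,
        deriv (fun a =>
          Real.exp (-(k * (Real.sqrt (a ^ 2 + p.1 ^ 2 + p.2 ^ 2) - a))) /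
            Real.sqrt (a ^ 2 + p.1 ^ 2 + p.2 ^ 2)) x) =
      ∫ p : ℝ × ℝ, Gfun k x (p.1 ^ 2 + p.2 ^ 2) from integral_congr_ae
        (Filter.Eventually.of_forall h1)]
  rw [← integral_comp_polarCoord_symm (fun p : ℝ × ℝ => Gfun k x (p.1 ^ 2 + p.2 ^ 2))]
  have h2 : ∀ p : ℝ × ℝ,
      p.1 • Gfun k x ((polarCoord.symm p).1 ^ 2 + (polarCoord.symm p).2 ^ 2) =
      p.1 * Gfun k x (p.1 ^ 2) := by
    intro p
    rw [smul_eq_mul]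
    congr 1
    simp only [polarCoord_symm_apply]
    rw [mul_pow, mul_pow, ← mul_add, Real.cos_sq_add_sin_sq, mul_one]
  simp only [h2]
  rw [polarCoord_target, Measure.volume_eq_prod, ← Measure.prod_restrict]
  have h3 := integral_prod_mul (μ := volume.restrict (Ioi (0:ℝ)))
    (ν := volume.restrict (Ioo (-π) π)) (fun r => r * Gfun k x (r ^ 2)) (fun _ => (1:ℝ))
  simp only [mul_one] at h3
  rw [h3, key_integral k x hk hx, zero_mul]
end

section
/- For a > 0 and real x, (2/π)∫₀^∞ cos(ξx) K₀(a·sqrt(ξ²+k²)) dξ = e^{-k·sqrt(x²+a²)}/sqrt(x²+a²) for k ≥ 0, a > 0 — in particular with a = σ this gives ∂Ψ/∂x = e^{-k(r-x)}/r after multiplying by e^{kx}. -/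
open MeasureTheory Real Set

/-- The modified Bessel function of the second kind of order 0, via its
classical integral representation `K₀(z) = ∫₀^∞ e^{-z cosh t} dt`. -/
noncomputable def besselK0 (z : ℝ) : ℝ :=
  ∫ t in Set.Ioi (0 : ℝ), Real.exp (-(z * Real.cosh t))

lemma cosh_quad {t : ℝ} (ht : 0 ≤ t) : 1 + t ^ 2 / 2 ≤ Real.cosh t := by
  have h1 : t / 2 ≤ Real.sinh (t / 2) := Real.self_le_sinh_iff.2 (by linarith)
  have h2 : Real.cosh t = 1 + 2 * Real.sinh (t / 2) ^ 2 := by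
    have h := Real.cosh_two_mul (t / 2)
    rw [show 2 * (t / 2) = t by ring] at h
    rw [h, Real.cosh_sq]; ring
  nlinarith

lemma integrableOn_K0 {z : ℝ} (hz : 0 < z) :
    IntegrableOn (fun t => Real.exp (-(z * Real.cosh t))) (Ioi 0) := by
  refine Integrable.mono' (g := fun t => Real.exp (-z) * Real.exp (-(z / 2) * t ^ 2)) ?_ ?_ ?_
  · exact ((integrable_exp_neg_mul_sq (by linarith)).const_mul _).integrableOn
  · exact (Real.continuous_exp.comp (by continuity)).aestronglyMeasurable
  · filter_upwards [ae_restrict_mem measurableSet_Ioi] with t ht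
    rw [Real.norm_eq_abs, abs_of_pos (Real.exp_pos _), ← Real.exp_add]
    apply Real.exp_le_exp.2
    nlinarith [cosh_quad (le_of_lt ht)]

lemma besselK0_nonneg (z : ℝ) : 0 ≤ besselK0 z :=
  integral_nonneg fun _ => (Real.exp_pos _).le

lemma besselK0_le {z : ℝ} (hz : 0 < z) :
    besselK0 z ≤ Real.exp (-z) * (Real.sqrt (π / (z / 2)) / 2) := by
  have h := setIntegral_mono_on (integrableOn_K0 hz)
    (((integrable_exp_neg_mul_sq (by linarith : (0:ℝ) < z / 2)).const_mul
      (Real.exp (-z))).integrableOn) measurableSet_Ioi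
    (fun t ht => by
      rw [← Real.exp_add]
      apply Real.exp_le_exp.2
      nlinarith [cosh_quad (le_of_lt (mem_Ioi.1 ht))])
  calc besselK0 z ≤ ∫ t in Ioi (0:ℝ), Real.exp (-z) * Real.exp (-(z/2) * t ^ 2) := h
    _ = Real.exp (-z) * (Real.sqrt (π / (z / 2)) / 2) := by
        rw [integral_const_mul, integral_gaussian_Ioi]

lemma gauss_rep {a q : ℝ} (ha : 0 < a) (hq : 0 < q) :
    IntegrableOn (fun u => u⁻¹ * Real.exp (-(a^2/(4*u)) - u*q^2)) (Ioi 0) ∧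
    ∫ u in Ioi (0:ℝ), u⁻¹ * Real.exp (-(a^2/(4*u)) - u*q^2) = 2 * besselK0 (a * q) := by
  set g : ℝ → ℝ := fun u => u⁻¹ * Real.exp (-(a^2/(4*u)) - u*q^2) with hg
  set c : ℝ := a / (2*q) with hcdef
  have hc : 0 < c := by positivity
  -- piece 1 : f₁ t = c * exp (-t)
  have hder1 : ∀ t ∈ Ioi (0:ℝ), HasDerivWithinAt (fun t => c * Real.exp (-t))
      (-(c * Real.exp (-t))) (Ioi 0) t := by
    intro t _
    have h := ((Real.hasDerivAt_exp (-t)).comp t (hasDerivAt_neg t)).const_mul c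
    have h2 : HasDerivAt (fun t => c * Real.exp (-t)) (-(c * Real.exp (-t))) t := by
      exact h.congr_deriv (by ring)
    exact h2.hasDerivWithinAt
  have hinj1 : InjOn (fun t => c * Real.exp (-t)) (Ioi 0) := by
    intro s _ t _ h
    simp only at h
    have := mul_left_cancel₀ (ne_of_gt hc) h
    exact neg_injective (Real.exp_injective this)
  have himg1 : (fun t => c * Real.exp (-t)) '' (Ioi 0) = Ioo 0 c := by
    ext y
    simp only [mem_image, mem_Ioi, mem_Ioo]
    constructor
    · rintro ⟨t, ht, rfl⟩
      refine ⟨by positivity, ?_⟩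
      have h1 : Real.exp (-t) < 1 := Real.exp_lt_one_iff.2 (by linarith)
      nlinarith
    · rintro ⟨hy0, hyc⟩
      refine ⟨Real.log (c / y), Real.log_pos ((one_lt_div hy0).2 hyc), ?_⟩
      rw [← Real.log_inv, Real.exp_log (by positivity)]
      field_simp
  have hpt1 : ∀ t ∈ Ioi (0:ℝ),
      |(-(c * Real.exp (-t)))| • g (c * Real.exp (-t)) = Real.exp (-(a*q*Real.cosh t)) := by
    intro t _
    rw [smul_eq_mul, abs_neg, abs_of_pos (by positivity), hg]
    simp only
    rw [mul_inv_cancel_left₀ (by positivity)]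
    congr 1
    have hqq : q * q⁻¹ = 1 := mul_inv_cancel₀ hq.ne'
    rw [Real.cosh_eq, Real.exp_neg]
    field_simp [hq.ne']
    linear_combination (-2*a^2*Real.exp t*(q*q⁻¹) + 2*a^2*Real.exp t^3 - 2*a^2*(-Real.exp t*(q*q⁻¹) - Real.exp t^2 + Real.exp t^3 + q*q⁻¹)) * hqq
  have key1 : ∫ u in Ioo 0 c, g u = besselK0 (a*q) := by
    rw [← himg1, integral_image_eq_integral_abs_deriv_smul measurableSet_Ioi hder1 hinj1 g]
    exact setIntegral_congr_fun measurableSet_Ioi hpt1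
  have int1 : IntegrableOn g (Ioo 0 c) := by
    rw [← himg1, integrableOn_image_iff_integrableOn_abs_deriv_smul measurableSet_Ioi hder1 hinj1]
    exact (integrableOn_K0 (by positivity)).congr_fun (fun t ht => (hpt1 t ht).symm) measurableSet_Ioi
  -- piece 2 : f₂ t = c * exp t
  have hder2 : ∀ t ∈ Ioi (0:ℝ), HasDerivWithinAt (fun t => c * Real.exp t)
      (c * Real.exp t) (Ioi 0) t := fun t _ => ((Real.hasDerivAt_exp t).const_mul c).hasDerivWithinAt
  have hinj2 : InjOn (fun t => c * Real.exp t) (Ioi 0) := by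
    intro s _ t _ h
    simp only at h
    exact Real.exp_injective (mul_left_cancel₀ (ne_of_gt hc) h)
  have himg2 : (fun t => c * Real.exp t) '' (Ioi 0) = Ioi c := by
    ext y
    simp only [mem_image, mem_Ioi]
    constructor
    · rintro ⟨t, ht, rfl⟩
      have h1 : 1 < Real.exp t := by rw [← Real.exp_zero]; exact Real.exp_lt_exp.2 ht
      nlinarith
    · intro hy
      have hy0 : 0 < y := hc.trans hy
      refine ⟨Real.log (y / c), Real.log_pos ((one_lt_div hc).2 hy), ?_⟩
      rw [Real.exp_log (by positivity)]
      field_simp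
  have hpt2 : ∀ t ∈ Ioi (0:ℝ),
      |c * Real.exp t| • g (c * Real.exp t) = Real.exp (-(a*q*Real.cosh t)) := by
    intro t _
    rw [smul_eq_mul, abs_of_pos (by positivity), hg]
    simp only
    rw [mul_inv_cancel_left₀ (by positivity)]
    congr 1
    have hqq : q * q⁻¹ = 1 := mul_inv_cancel₀ hq.ne'
    rw [Real.cosh_eq, Real.exp_neg]
    field_simp [hq.ne']
    linear_combination (-2*a^2*Real.exp t^3*(q*q⁻¹) + 2*a^2*Real.exp t - 2*a^2*(-1 + Real.exp t + q*q⁻¹*Real.exp t^2 - q*q⁻¹*Real.exp t^3)) * hqq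
  have key2 : ∫ u in Ioi c, g u = besselK0 (a*q) := by
    rw [← himg2, integral_image_eq_integral_abs_deriv_smul measurableSet_Ioi hder2 hinj2 g]
    exact setIntegral_congr_fun measurableSet_Ioi hpt2
  have int2 : IntegrableOn g (Ioi c) := by
    rw [← himg2, integrableOn_image_iff_integrableOn_abs_deriv_smul measurableSet_Ioi hder2 hinj2]
    exact (integrableOn_K0 (by positivity)).congr_fun (fun t ht => (hpt2 t ht).symm) measurableSet_Ioi
  -- combine
  have hIoc : IntegrableOn g (Ioc 0 c) := (integrableOn_Ioc_iff_integrableOn_Ioo (f := g)).2 int1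
  have hint : IntegrableOn g (Ioi 0) := by
    rw [← Ioc_union_Ioi_eq_Ioi hc.le]
    exact hIoc.union int2
  refine ⟨hint, ?_⟩
  rw [← Ioc_union_Ioi_eq_Ioi hc.le,
    setIntegral_union (Ioc_disjoint_Ioi le_rfl) measurableSet_Ioi hIoc int2,
    integral_Ioc_eq_integral_Ioo, key1, key2]
  ring

lemma cos_gauss {u : ℝ} (hu : 0 < u) (x : ℝ) :
    ∫ ξ in Ioi (0:ℝ), Real.cos (ξ*x) * Real.exp (-(u*ξ^2))
      = Real.sqrt (π/u) / 2 * Real.exp (-(x^2/(4*u))) := by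
  have hbre : 0 < ((u:ℂ)).re := by simpa using hu
  have hC : ∫ ξ : ℝ, Complex.exp (Complex.I*(x:ℂ)*(ξ:ℂ)) * Complex.exp (-(u:ℂ)*(ξ:ℂ)^2)
      = ((π:ℂ) / (u:ℂ)) ^ (1/2 : ℂ) * Complex.exp (-(x:ℂ)^2 / (4*(u:ℂ))) :=
    fourierIntegral_gaussian hbre (x:ℂ)
  have hCint : Integrable (fun ξ : ℝ => Complex.exp (Complex.I*(x:ℂ)*(ξ:ℂ)) * Complex.exp (-(u:ℂ)*(ξ:ℂ)^2)) := by
    have h := integrable_cexp_quadratic hbre (Complex.I*(x:ℂ)) 0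
    apply h.congr
    filter_upwards with ξ
    rw [← Complex.exp_add]
    congr 1
    ring
  have hre : ∀ ξ : ℝ, (Complex.exp (Complex.I*(x:ℂ)*(ξ:ℂ)) * Complex.exp (-(u:ℂ)*(ξ:ℂ)^2)).re
      = Real.cos (ξ*x) * Real.exp (-(u*ξ^2)) := by
    intro ξ
    rw [show -(u:ℂ)*(ξ:ℂ)^2 = ((-(u*ξ^2):ℝ):ℂ) by push_cast; ring, ← Complex.ofReal_exp,
      mul_comm, Complex.re_ofReal_mul,
      show Complex.I*(x:ℂ)*(ξ:ℂ) = (((ξ*x:ℝ)):ℂ) * Complex.I by push_cast; ring,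
      Complex.exp_ofReal_mul_I_re]
    ring
  have hfull : ∫ ξ : ℝ, Real.cos (ξ*x) * Real.exp (-(u*ξ^2))
      = Real.sqrt (π/u) * Real.exp (-(x^2/(4*u))) := by
    have h1 := integral_re hCint
    simp only [RCLike.re_to_complex] at h1
    have h2 : ((π:ℂ) / (u:ℂ)) ^ (1/2 : ℂ) = ((Real.sqrt (π/u) : ℝ) : ℂ) := by
      rw [show ((π:ℂ) / (u:ℂ)) = ((π/u : ℝ) : ℂ) by push_cast; ring,
        show (1/2 : ℂ) = ((1/2 : ℝ) : ℂ) by norm_num,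
        ← Complex.ofReal_cpow (by positivity)]
      norm_num [Real.sqrt_eq_rpow]
    have h3 : Complex.exp (-(x:ℂ)^2 / (4*(u:ℂ))) = ((Real.exp (-(x^2/(4*u))) : ℝ) : ℂ) := by
      rw [Complex.ofReal_exp]
      congr 1
      push_cast
      ring
    calc ∫ ξ : ℝ, Real.cos (ξ*x) * Real.exp (-(u*ξ^2))
        = ∫ ξ : ℝ, (Complex.exp (Complex.I*(x:ℂ)*(ξ:ℂ)) * Complex.exp (-(u:ℂ)*(ξ:ℂ)^2)).re :=
          integral_congr_ae (Filter.Eventually.of_forall fun ξ => (hre ξ).symm)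
      _ = (∫ ξ : ℝ, Complex.exp (Complex.I*(x:ℂ)*(ξ:ℂ)) * Complex.exp (-(u:ℂ)*(ξ:ℂ)^2)).re := h1
      _ = Real.sqrt (π/u) * Real.exp (-(x^2/(4*u))) := by
          rw [hC, h2, h3, ← Complex.ofReal_mul, Complex.ofReal_re]
  have hint : Integrable (fun ξ : ℝ => Real.cos (ξ*x) * Real.exp (-(u*ξ^2))) := by
    refine Integrable.mono' (integrable_exp_neg_mul_sq hu) ?_ ?_
    · exact ((Real.continuous_cos.comp (by continuity)).mul
        (Real.continuous_exp.comp (by continuity))).aestronglyMeasurable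
    · filter_upwards with ξ
      rw [Real.norm_eq_abs, abs_mul, abs_of_pos (Real.exp_pos _)]
      calc |Real.cos (ξ*x)| * Real.exp (-(u*ξ^2)) ≤ 1 * Real.exp (-(u*ξ^2)) := by
            gcongr; exact Real.abs_cos_le_one _
        _ = Real.exp (-u*ξ^2) := by rw [one_mul]; ring_nf
  have hsymm : ∫ ξ in Iic (0:ℝ), Real.cos (ξ*x) * Real.exp (-(u*ξ^2))
      = ∫ ξ in Ioi (0:ℝ), Real.cos (ξ*x) * Real.exp (-(u*ξ^2)) := by
    have hh := integral_comp_neg_Ioi (c := (0:ℝ))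
      (f := fun ξ => Real.cos (ξ*x) * Real.exp (-(u*ξ^2)))
    rw [neg_zero] at hh
    rw [← hh]
    refine setIntegral_congr_fun measurableSet_Ioi fun ξ _ => ?_
    show Real.cos (-ξ*x) * Real.exp (-(u*(-ξ)^2)) = _
    rw [show -ξ*x = -(ξ*x) by ring, Real.cos_neg, neg_sq]
  have hsum := intervalIntegral.integral_Iic_add_Ioi (b := (0:ℝ))
    hint.integrableOn hint.integrableOn
  rw [hsymm] at hsum
  have h2 : (2:ℝ) * ∫ ξ in Ioi (0:ℝ), Real.cos (ξ*x) * Real.exp (-(u*ξ^2))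
      = Real.sqrt (π/u) * Real.exp (-(x^2/(4*u))) := by
    rw [two_mul, hsum, hfull]
  linarith

lemma mul_exp_neg_le {c : ℝ} (hc : 0 ≤ c) : c * Real.exp (-c) ≤ (Real.exp 1)⁻¹ := by
  have h : c ≤ Real.exp (c - 1) := by linarith [Real.add_one_le_exp (c - 1)]
  calc c * Real.exp (-c) ≤ Real.exp (c - 1) * Real.exp (-c) :=
        mul_le_mul_of_nonneg_right h (Real.exp_pos _).le
    _ = (Real.exp 1)⁻¹ := by
        rw [← Real.exp_add, ← Real.exp_neg]
        congr 1
        ring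

lemma keyD_zero {A : ℝ} (hA : 0 < A) :
    ∫ u in Ioi (0:ℝ), (u * Real.sqrt u)⁻¹ * Real.exp (-(A^2/u) - 0^2*u)
      = Real.sqrt π / A * Real.exp (-(2*A*0)) := by
  have himg : (fun v : ℝ => A^2/v^2) '' (Ioi 0) = Ioi 0 := by
    ext y
    simp only [mem_image, mem_Ioi]
    constructor
    · rintro ⟨v, hv, rfl⟩; positivity
    · intro hy
      refine ⟨A / Real.sqrt y, by positivity, ?_⟩
      rw [div_pow, Real.sq_sqrt hy.le]
      field_simp
  have hder : ∀ v ∈ Ioi (0:ℝ), HasDerivWithinAt (fun v : ℝ => A^2/v^2)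
      (A^2 * (-(2*v)/(v^2)^2)) (Ioi 0) v := by
    intro v hv
    have h := ((hasDerivAt_pow 2 v).inv (pow_ne_zero 2 (ne_of_gt hv))).const_mul (A^2)
    have h2 : HasDerivAt (fun v : ℝ => A^2/v^2) (A^2 * (-(2*v)/(v^2)^2)) v := by
      simp only [div_eq_mul_inv]
      refine h.congr_deriv ?_
      push_cast
      ring
    exact h2.hasDerivWithinAt
  have hanti : StrictAntiOn (fun v : ℝ => A^2/v^2) (Ioi 0) := by
    intro s hs t ht hst
    have h1 : s^2 < t^2 := by nlinarith [mem_Ioi.1 hs, mem_Ioi.1 ht]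
    exact div_lt_div_of_pos_left (by positivity) (by nlinarith [mem_Ioi.1 hs]) h1
  have key : ∫ u in Ioi (0:ℝ), (u * Real.sqrt u)⁻¹ * Real.exp (-(A^2/u) - 0^2*u)
      = ∫ v in Ioi (0:ℝ), (2/A) * Real.exp (-(v^2)) := by
    conv_lhs => rw [← himg]
    rw [integral_image_eq_integral_abs_deriv_smul measurableSet_Ioi hder hanti.injOn]
    refine setIntegral_congr_fun measurableSet_Ioi fun v hv => ?_
    have hv' : (0:ℝ) < v := hv
    rw [smul_eq_mul]
    have h1 : Real.sqrt (A^2/v^2) = A/v := by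
      rw [show A^2/v^2 = (A/v)^2 by ring, Real.sqrt_sq (by positivity)]
    have habs : |A^2 * (-(2*v)/(v^2)^2)| = A^2 * (2*v/(v^2)^2) := by
      rw [abs_mul, abs_of_pos (by positivity : (0:ℝ) < A^2), abs_div, abs_neg,
        abs_of_pos (by positivity : (0:ℝ) < 2*v), abs_of_pos (by positivity : (0:ℝ) < (v^2)^2)]
    have hE : -(A^2/(A^2/v^2)) - (0:ℝ)^2*(A^2/v^2) = -(v^2) := by
      field_simp
      ring
    rw [habs, h1, hE]
    field_simp
  rw [key, integral_const_mul]
  have hg : ∫ v in Ioi (0:ℝ), Real.exp (-(v^2)) = Real.sqrt (π/1) / 2 := by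
    rw [← integral_gaussian_Ioi 1]
    exact setIntegral_congr_fun measurableSet_Ioi fun v _ => by norm_num
  rw [hg]
  rw [show (2:ℝ)*A*0 = 0 by ring, neg_zero, Real.exp_zero]
  rw [show π/(1:ℝ) = π by ring]
  field_simp

lemma keyD_pos {A B : ℝ} (hA : 0 < A) (hB : 0 < B) :
    ∫ u in Ioi (0:ℝ), (u * Real.sqrt u)⁻¹ * Real.exp (-(A^2/u) - B^2*u)
      = Real.sqrt π / A * Real.exp (-(2*A*B)) := by
  set E : ℝ → ℝ := fun t => Real.exp (-(A^2/t^2) - B^2*t^2) with hEdef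
  have hmeasE : Measurable E := by fun_prop
  have hEint : IntegrableOn E (Ioi 0) := by
    refine Integrable.mono' ((integrable_exp_neg_mul_sq (by positivity : (0:ℝ) < B^2)).integrableOn) ?_ ?_
    · exact hmeasE.aestronglyMeasurable.restrict
    · filter_upwards with t
      have h0 : (0:ℝ) ≤ A^2/t^2 := by positivity
      show ‖E t‖ ≤ Real.exp (-B^2*t^2)
      rw [Real.norm_eq_abs, abs_of_pos (Real.exp_pos _)]
      exact Real.exp_le_exp.2 (by linarith)
  have hE2int : IntegrableOn (fun t => (t^2)⁻¹ * E t) (Ioi 0) := by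
    refine Integrable.mono'
      (((integrable_exp_neg_mul_sq (by positivity : (0:ℝ) < B^2)).integrableOn).const_mul
        ((A^2 * Real.exp 1)⁻¹)) ?_ ?_
    · exact ((measurable_id.pow_const 2).inv.mul hmeasE).aestronglyMeasurable.restrict
    · filter_upwards [ae_restrict_mem measurableSet_Ioi] with t ht
      have ht' : (0:ℝ) < t := ht
      rw [Real.norm_eq_abs, abs_of_pos (by positivity)]
      have hsplit : E t = Real.exp (-(A^2/t^2)) * Real.exp (-(B^2*t^2)) := by
        simp only [hEdef]
        rw [← Real.exp_add]
        try congr 1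
        try ring
      have h := mul_exp_neg_le (show (0:ℝ) ≤ A^2/t^2 by positivity)
      have h2 := mul_le_mul_of_nonneg_left h (by positivity : (0:ℝ) ≤ (A^2)⁻¹)
      have hkey : (t^2)⁻¹ * Real.exp (-(A^2/t^2)) ≤ (A^2 * Real.exp 1)⁻¹ := by
        calc (t^2)⁻¹ * Real.exp (-(A^2/t^2))
            = (A^2)⁻¹ * (A^2/t^2 * Real.exp (-(A^2/t^2))) := by field_simp; try ring
          _ ≤ (A^2)⁻¹ * (Real.exp 1)⁻¹ := h2
          _ = (A^2 * Real.exp 1)⁻¹ := by rw [mul_inv]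
      calc (t^2)⁻¹ * E t = ((t^2)⁻¹ * Real.exp (-(A^2/t^2))) * Real.exp (-(B^2*t^2)) := by
            rw [hsplit]; ring
        _ ≤ (A^2 * Real.exp 1)⁻¹ * Real.exp (-(B^2*t^2)) :=
            mul_le_mul_of_nonneg_right hkey (Real.exp_pos _).le
        _ = (A^2 * Real.exp 1)⁻¹ * Real.exp (-B^2*t^2) := by rw [neg_mul]
  -- substitution u = t^2
  have himg_sq : (fun t : ℝ => t^2) '' (Ioi 0) = Ioi 0 := by
    ext y
    simp only [mem_image, mem_Ioi]
    constructor
    · rintro ⟨t, ht, rfl⟩; positivity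
    · intro hy
      exact ⟨Real.sqrt y, Real.sqrt_pos.2 hy, Real.sq_sqrt hy.le⟩
  have hmono_sq : StrictMonoOn (fun t : ℝ => t^2) (Ioi 0) := by
    intro s hs t ht hst
    have hs' : (0:ℝ) < s := hs
    show s^2 < t^2
    nlinarith
  have hder_sq : ∀ t ∈ Ioi (0:ℝ), HasDerivWithinAt (fun t : ℝ => t^2) (2*t) (Ioi 0) t := by
    intro t _
    simpa using (hasDerivAt_pow 2 t).hasDerivWithinAt
  have s1 : ∫ u in Ioi (0:ℝ), (u * Real.sqrt u)⁻¹ * Real.exp (-(A^2/u) - B^2*u)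
      = 2 * ∫ t in Ioi (0:ℝ), (t^2)⁻¹ * E t := by
    conv_lhs => rw [← himg_sq]
    rw [integral_image_eq_integral_abs_deriv_smul measurableSet_Ioi hder_sq hmono_sq.injOn,
      ← integral_const_mul]
    refine setIntegral_congr_fun measurableSet_Ioi fun t ht => ?_
    have ht' : (0:ℝ) < t := ht
    have hEapp : Real.exp (-(A^2/t^2) - B^2*t^2) = E t := by simp only [hEdef]
    rw [smul_eq_mul, abs_of_pos (by positivity : (0:ℝ) < 2*t), Real.sqrt_sq ht'.le,
      show -(A^2/t^2) - B^2*(t^2) = -(A^2/t^2) - B^2*t^2 by ring, hEapp]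
    have hEfact : E t = Real.exp (-(A^2/t^2) - B^2*t^2) := hEapp.symm
    field_simp
  -- substitution t = A/(B*s)
  have himg_f : (fun s : ℝ => A/(B*s)) '' (Ioi 0) = Ioi 0 := by
    ext y
    simp only [mem_image, mem_Ioi]
    constructor
    · rintro ⟨s, hs, rfl⟩; positivity
    · intro hy
      refine ⟨A/(B*y), by positivity, ?_⟩
      field_simp
  have hanti_f : StrictAntiOn (fun s : ℝ => A/(B*s)) (Ioi 0) := by
    intro s hs t ht hst
    have hs' : (0:ℝ) < s := hs
    have ht' : (0:ℝ) < t := ht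
    show A/(B*t) < A/(B*s)
    apply div_lt_div_of_pos_left hA (by positivity) (by nlinarith)
  have hder_f : ∀ s ∈ Ioi (0:ℝ), HasDerivWithinAt (fun s : ℝ => A/(B*s))
      (A/B * -(s^2)⁻¹) (Ioi 0) s := by
    intro s hs
    have hs' : (0:ℝ) < s := hs
    have h := (hasDerivAt_inv hs'.ne').const_mul (A/B)
    have h2 : HasDerivAt (fun s : ℝ => A/(B*s)) (A/B * -(s^2)⁻¹) s := by
      apply h.congr_of_eventuallyEq
      filter_upwards with y
      rw [div_mul_eq_div_div, div_eq_mul_inv (A/B)]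
    exact h2.hasDerivWithinAt
  have s2 : ∫ t in Ioi (0:ℝ), (t^2)⁻¹ * E t = (B/A) * ∫ s in Ioi (0:ℝ), E s := by
    conv_lhs => rw [← himg_f]
    rw [integral_image_eq_integral_abs_deriv_smul measurableSet_Ioi hder_f hanti_f.injOn,
      ← integral_const_mul]
    refine setIntegral_congr_fun measurableSet_Ioi fun s hs => ?_
    have hs' : (0:ℝ) < s := hs
    have hEapp : E (A/(B*s)) = E s := by
      simp only [hEdef]
      congr 1
      rw [div_pow]
      field_simp
      ring
    rw [smul_eq_mul, mul_neg, abs_neg, abs_of_pos (by positivity), hEapp]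
    field_simp
  -- substitution v = B*t - A*t⁻¹
  have hsqrtpi : ∫ v : ℝ, Real.exp (-(v^2)) = Real.sqrt π := by
    have h := integral_gaussian 1
    rw [show π/(1:ℝ) = π by ring] at h
    rw [← h]
    congr 1
    ext v
    norm_num
  have hmono_g : StrictMonoOn (fun t : ℝ => B*t - A*t⁻¹) (Ioi 0) := by
    intro s hs t ht hst
    have hs' : (0:ℝ) < s := hs
    have ht' : (0:ℝ) < t := ht
    have h1 : t⁻¹ < s⁻¹ := by
      rw [inv_lt_inv₀ ht' hs']
      exact hst
    show B*s - A*s⁻¹ < B*t - A*t⁻¹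
    have h2 : B*s < B*t := by nlinarith
    nlinarith
  have hder_g : ∀ t ∈ Ioi (0:ℝ), HasDerivWithinAt (fun t : ℝ => B*t - A*t⁻¹)
      (B + A*(t^2)⁻¹) (Ioi 0) t := by
    intro t ht
    have ht' : (0:ℝ) < t := ht
    have h1 : HasDerivAt (fun t : ℝ => B*t) B t := by
      simpa using (hasDerivAt_id t).const_mul B
    have h2 := (hasDerivAt_inv ht'.ne').const_mul A
    have h4 : HasDerivAt (fun t : ℝ => B*t - A*t⁻¹) (B + A*(t^2)⁻¹) t := by
      exact (h1.sub h2).congr_deriv (by ring)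
    exact h4.hasDerivWithinAt
  have himg_g : (fun t : ℝ => B*t - A*t⁻¹) '' (Ioi 0) = univ := by
    ext v
    simp only [mem_image, mem_Ioi, mem_univ, iff_true]
    have hs2 : (Real.sqrt (v^2 + 4*A*B))^2 = v^2 + 4*A*B :=
      Real.sq_sqrt (by positivity)
    set s := Real.sqrt (v^2 + 4*A*B) with hsdef
    have hs0 : 0 ≤ s := Real.sqrt_nonneg _
    have hsv : -v < s := by nlinarith [mul_pos hA hB]
    have hvs : (0:ℝ) < v + s := by linarith
    refine ⟨(v + s)/(2*B), div_pos hvs (by positivity), ?_⟩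
    show B*((v+s)/(2*B)) - A*((v+s)/(2*B))⁻¹ = v
    have expand : B*((v+s)/(2*B)) = (v+s)/2 := by field_simp
    have expand2 : A*((v+s)/(2*B))⁻¹ = 2*A*B/(v+s) := by rw [inv_div]; ring
    rw [expand, expand2, div_sub_div _ _ (two_ne_zero) hvs.ne', div_eq_iff (by positivity)]
    linear_combination hs2
  have hpt : ∀ t ∈ Ioi (0:ℝ), |B + A*(t^2)⁻¹| • Real.exp (-((B*t - A*t⁻¹)^2))
      = Real.exp (2*A*B) * (B * E t + A * ((t^2)⁻¹ * E t)) := by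
    intro t ht
    have ht' : (0:ℝ) < t := ht
    rw [smul_eq_mul, abs_of_pos (by positivity)]
    have hsplit : Real.exp (-((B*t - A*t⁻¹)^2)) = Real.exp (2*A*B) * E t := by
      simp only [hEdef]
      rw [← Real.exp_add]
      congr 1
      field_simp
      ring
    rw [hsplit]
    ring
  have s3 : Real.sqrt π
      = Real.exp (2*A*B) * ((B * ∫ t in Ioi (0:ℝ), E t) + A * ∫ t in Ioi (0:ℝ), (t^2)⁻¹ * E t) := by
    calc Real.sqrt π = ∫ v in univ, Real.exp (-(v^2)) := by
          rw [setIntegral_univ]; exact hsqrtpi.symm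
      _ = ∫ t in Ioi (0:ℝ), |B + A*(t^2)⁻¹| • Real.exp (-((B*t - A*t⁻¹)^2)) := by
          rw [← himg_g, integral_image_eq_integral_abs_deriv_smul measurableSet_Ioi hder_g
            hmono_g.injOn]
      _ = ∫ t in Ioi (0:ℝ), Real.exp (2*A*B) * (B * E t + A * ((t^2)⁻¹ * E t)) :=
          setIntegral_congr_fun measurableSet_Ioi hpt
      _ = Real.exp (2*A*B) * ((B * ∫ t in Ioi (0:ℝ), E t) + A * ∫ t in Ioi (0:ℝ), (t^2)⁻¹ * E t) := by
          rw [integral_const_mul, integral_add (hEint.const_mul B) (hE2int.const_mul A),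
            integral_const_mul, integral_const_mul]
  have hIE : ∫ t in Ioi (0:ℝ), E t = Real.sqrt π * Real.exp (-(2*A*B)) / (2*B) := by
    rw [s2] at s3
    have s3' : Real.sqrt π = Real.exp (2*A*B) * (2*B) * ∫ t in Ioi (0:ℝ), E t := by
      rw [s3]
      field_simp
      ring
    rw [Real.exp_neg]
    rw [s3']
    have he := Real.exp_pos (2*A*B)
    field_simp
    try ring
  rw [s1, s2, hIE]
  field_simp
  try ring

lemma keyD {A B : ℝ} (hA : 0 < A) (hB : 0 ≤ B) :
    ∫ u in Ioi (0:ℝ), (u * Real.sqrt u)⁻¹ * Real.exp (-(A^2/u) - B^2*u)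
      = Real.sqrt π / A * Real.exp (-(2*A*B)) := by
  rcases hB.eq_or_lt with h | h
  · rw [← h]
    exact keyD_zero hA
  · exact keyD_pos hA h

/-- For `a > 0`, `k ≥ 0` and real `x`,
`(2/π)∫₀^∞ cos(ξx) K₀(a√(ξ²+k²)) dξ = e^{-k√(x²+a²)}/√(x²+a²)`;
in particular with `a = σ` this gives `∂Ψ/∂x = e^{-k(r-x)}/r` after
multiplying by `e^{kx}`. -/
theorem statement5 (a k x : ℝ) (ha : 0 < a) (hk : 0 ≤ k) :
    (2 / Real.pi) *
        (∫ ξ in Set.Ioi (0 : ℝ),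
          Real.cos (ξ * x) * besselK0 (a * Real.sqrt (ξ ^ 2 + k ^ 2))) =
      Real.exp (-(k * Real.sqrt (x ^ 2 + a ^ 2))) / Real.sqrt (x ^ 2 + a ^ 2) := by
  -- notation
  set F : ℝ → ℝ → ℝ :=
    fun ξ u => Real.cos (ξ*x) * (u⁻¹ * Real.exp (-(a^2/(4*u)) - u*(ξ^2 + k^2))) with hFdef
  set μ := volume.restrict (Ioi (0:ℝ)) with hμ
  have hqpos : ∀ ξ : ℝ, 0 < ξ → 0 < Real.sqrt (ξ^2 + k^2) := by
    intro ξ hξ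
    apply Real.sqrt_pos.2
    positivity
  have hqsq : ∀ ξ : ℝ, (Real.sqrt (ξ^2 + k^2))^2 = ξ^2 + k^2 := by
    intro ξ
    exact Real.sq_sqrt (by positivity)
  -- step 1 : pointwise Gaussian representation
  have hrep : ∀ ξ : ℝ, 0 < ξ →
      IntegrableOn (fun u => u⁻¹ * Real.exp (-(a^2/(4*u)) - u*(ξ^2+k^2))) (Ioi 0) ∧
      ∫ u in Ioi (0:ℝ), u⁻¹ * Real.exp (-(a^2/(4*u)) - u*(ξ^2+k^2))
        = 2 * besselK0 (a * Real.sqrt (ξ^2 + k^2)) := by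
    intro ξ hξ
    have h := gauss_rep ha (hqpos ξ hξ)
    rw [hqsq ξ] at h
    exact h
  -- measurability of F
  have hmeas : AEStronglyMeasurable (Function.uncurry F) (μ.prod μ) := by
    apply Measurable.aestronglyMeasurable
    apply Measurable.mul
    · exact (Real.measurable_cos.comp (measurable_fst.mul_const x))
    · exact (measurable_snd.inv.mul ((Measurable.neg ((measurable_const.div
        (measurable_const.mul measurable_snd)))).sub
        (measurable_snd.mul ((measurable_fst.pow_const 2).add_const (k^2)))).exp)
  -- the dominating function
  set D : ℝ → ℝ := fun ξ => Real.exp (-(a*ξ)) * Real.sqrt (π/(a*ξ/2)) with hDdef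
  have hDmeas : Measurable D := by fun_prop
  have hDint : IntegrableOn D (Ioi 0) := by
    have h1 : IntegrableOn D (Ioc 0 1) := by
      refine Integrable.mono' (g := fun ξ => Real.sqrt (2*π/a) * ξ ^ (-(1:ℝ)/2)) ?_ ?_ ?_
      · apply Integrable.const_mul
        rw [← IntegrableOn, integrableOn_Ioc_iff_integrableOn_Ioo]
        exact (intervalIntegral.integrableOn_Ioo_rpow_iff zero_lt_one).2 (by norm_num)
      · exact hDmeas.aestronglyMeasurable.restrict
      · filter_upwards [ae_restrict_mem measurableSet_Ioc] with ξ hξ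
        have hξ' : (0:ℝ) < ξ := hξ.1
        rw [Real.norm_eq_abs, abs_of_nonneg (by positivity)]
        have hrw : Real.sqrt (π/(a*ξ/2)) = Real.sqrt (2*π/a) * ξ ^ (-(1:ℝ)/2) := by
          rw [show π/(a*ξ/2) = (2*π/a) * ξ⁻¹ by field_simp,
            Real.sqrt_mul (by positivity), Real.sqrt_inv,
            show ξ ^ (-(1:ℝ)/2) = (Real.sqrt ξ)⁻¹ by
              rw [Real.sqrt_eq_rpow, ← Real.rpow_neg hξ'.le]; norm_num]
        rw [hDdef]
        simp only
        rw [hrw]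
        have hexp1 : Real.exp (-(a*ξ)) ≤ 1 := by
          rw [← Real.exp_zero]
          exact Real.exp_le_exp.2 (by nlinarith)
        nlinarith [Real.sqrt_nonneg (2*π/a), Real.rpow_nonneg hξ'.le (-(1:ℝ)/2),
          mul_nonneg (Real.sqrt_nonneg (2*π/a)) (Real.rpow_nonneg hξ'.le (-(1:ℝ)/2))]
    have h2 : IntegrableOn D (Ioi 1) := by
      refine Integrable.mono' (g := fun ξ => Real.sqrt (2*π/a) * Real.exp (-a*ξ)) ?_ ?_ ?_
      · exact (exp_neg_integrableOn_Ioi 1 ha).const_mul _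
      · exact hDmeas.aestronglyMeasurable.restrict
      · filter_upwards [ae_restrict_mem measurableSet_Ioi] with ξ hξ
        have hξ' : (1:ℝ) ≤ ξ := le_of_lt hξ
        rw [Real.norm_eq_abs, abs_of_nonneg (by positivity), hDdef]
        simp only
        have hs : Real.sqrt (π/(a*ξ/2)) ≤ Real.sqrt (2*π/a) := by
          apply Real.sqrt_le_sqrt
          rw [div_le_div_iff₀ (by positivity) (by positivity)]
          nlinarith [mul_nonneg (mul_pos Real.pi_pos ha).le (sub_nonneg.2 hξ')]
        calc Real.exp (-(a*ξ)) * Real.sqrt (π/(a*ξ/2))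
            ≤ Real.exp (-(a*ξ)) * Real.sqrt (2*π/a) := by
              exact mul_le_mul_of_nonneg_left hs (Real.exp_pos _).le
          _ = Real.sqrt (2*π/a) * Real.exp (-a*ξ) := by rw [neg_mul]; ring
    have := h1.union h2
    rwa [Ioc_union_Ioi_eq_Ioi zero_le_one] at this
  -- bound : for ξ > 0, 2 * besselK0 (a √(ξ²+k²)) ≤ D ξ
  have hbound : ∀ ξ : ℝ, 0 < ξ → 2 * besselK0 (a * Real.sqrt (ξ^2 + k^2)) ≤ D ξ := by
    intro ξ hξ
    set z := a * Real.sqrt (ξ^2 + k^2) with hzdef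
    have hzpos : 0 < z := by
      have := hqpos ξ hξ
      positivity
    have hzge : a * ξ ≤ z := by
      rw [hzdef]
      apply mul_le_mul_of_nonneg_left _ ha.le
      rw [show ξ = Real.sqrt (ξ^2) by rw [Real.sqrt_sq hξ.le]]
      apply Real.sqrt_le_sqrt
      rw [Real.sq_sqrt (by positivity : (0:ℝ) ≤ ξ^2)]
      nlinarith
    have h1 := besselK0_le hzpos
    have h2 : Real.exp (-z) ≤ Real.exp (-(a*ξ)) := Real.exp_le_exp.2 (by linarith)
    have h3 : Real.sqrt (π/(z/2)) ≤ Real.sqrt (π/(a*ξ/2)) := by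
      apply Real.sqrt_le_sqrt
      apply div_le_div_of_nonneg_left Real.pi_pos.le (by positivity)
      linarith
    rw [hDdef]
    simp only
    calc 2 * besselK0 z ≤ 2 * (Real.exp (-z) * (Real.sqrt (π/(z/2))/2)) := by
          linarith [besselK0_le hzpos]
      _ = Real.exp (-z) * Real.sqrt (π/(z/2)) := by ring
      _ ≤ Real.exp (-(a*ξ)) * Real.sqrt (π/(a*ξ/2)) := by
          apply mul_le_mul h2 h3 (Real.sqrt_nonneg _) (Real.exp_pos _).le
  -- Fubini integrability
  have hGint : Integrable (Function.uncurry F) (μ.prod μ) := by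
    rw [integrable_prod_iff hmeas]
    constructor
    · filter_upwards [ae_restrict_mem measurableSet_Ioi] with ξ hξ
      exact ((hrep ξ hξ).1).const_mul (Real.cos (ξ*x))
    · refine Integrable.mono' (g := D) hDint (hmeas.norm.integral_prod_right') ?_
      filter_upwards [ae_restrict_mem measurableSet_Ioi] with ξ hξ
      have hξ' : (0:ℝ) < ξ := hξ
      have heq : ∫ u, ‖Function.uncurry F (ξ, u)‖ ∂μ
          = |Real.cos (ξ*x)| * (2 * besselK0 (a * Real.sqrt (ξ^2 + k^2))) := by
        rw [hμ, ← (hrep ξ hξ').2, ← integral_const_mul]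
        refine setIntegral_congr_fun measurableSet_Ioi fun u hu => ?_
        have hu' : (0:ℝ) < u := hu
        rw [Function.uncurry, hFdef]
        simp only
        rw [Real.norm_eq_abs, abs_mul, abs_of_nonneg (show
          (0:ℝ) ≤ u⁻¹ * Real.exp (-(a^2/(4*u)) - u*(ξ^2+k^2)) by positivity)]
      rw [Real.norm_eq_abs, heq, abs_of_nonneg (mul_nonneg (abs_nonneg _)
        (by linarith [besselK0_nonneg (a * Real.sqrt (ξ^2+k^2))]))]
      calc |Real.cos (ξ*x)| * (2 * besselK0 (a * Real.sqrt (ξ^2 + k^2)))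
          ≤ 1 * (2 * besselK0 (a * Real.sqrt (ξ^2 + k^2))) := by
            apply mul_le_mul_of_nonneg_right (Real.abs_cos_le_one _)
            linarith [besselK0_nonneg (a * Real.sqrt (ξ^2+k^2))]
        _ = 2 * besselK0 (a * Real.sqrt (ξ^2 + k^2)) := one_mul _
        _ ≤ D ξ := hbound ξ hξ'
  -- main computation
  set ρ := Real.sqrt (x^2 + a^2) with hρdef
  have hρ : 0 < ρ := Real.sqrt_pos.2 (by positivity)
  have hρ2 : ρ^2 = x^2 + a^2 := Real.sq_sqrt (by positivity)
  have step1 : ∫ ξ in Ioi (0:ℝ), Real.cos (ξ * x) * besselK0 (a * Real.sqrt (ξ^2 + k^2))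
      = (1/2) * ∫ ξ in Ioi (0:ℝ), ∫ u in Ioi (0:ℝ), F ξ u := by
    rw [← integral_const_mul]
    refine setIntegral_congr_fun measurableSet_Ioi fun ξ hξ => ?_
    have hξ' : (0:ℝ) < ξ := hξ
    have hK : besselK0 (a * Real.sqrt (ξ^2+k^2))
        = (1/2) * ∫ u in Ioi (0:ℝ), u⁻¹ * Real.exp (-(a^2/(4*u)) - u*(ξ^2+k^2)) := by
      rw [(hrep ξ hξ').2]; ring
    rw [hK]
    calc Real.cos (ξ*x) * ((1/2) * ∫ u in Ioi (0:ℝ), u⁻¹ * Real.exp (-(a^2/(4*u)) - u*(ξ^2+k^2)))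
        = (1/2) * (Real.cos (ξ*x) * ∫ u in Ioi (0:ℝ), u⁻¹ * Real.exp (-(a^2/(4*u)) - u*(ξ^2+k^2))) := by
          ring
      _ = (1/2) * ∫ u in Ioi (0:ℝ), F ξ u := by rw [integral_const_mul]
  have step2 : ∫ ξ in Ioi (0:ℝ), ∫ u in Ioi (0:ℝ), F ξ u
      = ∫ u in Ioi (0:ℝ), ∫ ξ in Ioi (0:ℝ), F ξ u := integral_integral_swap hGint
  have step3 : ∀ u ∈ Ioi (0:ℝ), ∫ ξ in Ioi (0:ℝ), F ξ u
      = (Real.sqrt π / 2) * ((u * Real.sqrt u)⁻¹ * Real.exp (-((ρ/2)^2/u) - k^2*u)) := by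
    intro u hu
    have hu' : (0:ℝ) < u := hu
    have hsu : 0 < Real.sqrt u := Real.sqrt_pos.2 hu'
    have hfact : ∀ ξ : ℝ, F ξ u = (u⁻¹ * Real.exp (-(a^2/(4*u)) - u*k^2))
        * (Real.cos (ξ*x) * Real.exp (-(u*ξ^2))) := by
      intro ξ
      rw [hFdef]
      simp only
      rw [show -(a^2/(4*u)) - u*(ξ^2+k^2) = (-(a^2/(4*u)) - u*k^2) + (-(u*ξ^2)) by ring,
        Real.exp_add]
      ring
    rw [setIntegral_congr_fun measurableSet_Ioi (fun ξ _ => hfact ξ), integral_const_mul,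
      cos_gauss hu' x]
    have hsqu : Real.sqrt (π/u) = Real.sqrt π / Real.sqrt u := Real.sqrt_div Real.pi_pos.le u
    have hexpc : Real.exp (-(a^2/(4*u)) - u*k^2) * Real.exp (-(x^2/(4*u)))
        = Real.exp (-((ρ/2)^2/u) - k^2*u) := by
      rw [← Real.exp_add]
      congr 1
      rw [show (ρ/2)^2 = (x^2+a^2)/4 by rw [div_pow, hρ2]; norm_num]
      field_simp
      ring
    have hscal : u⁻¹ * (Real.sqrt π / Real.sqrt u / 2)
        = (Real.sqrt π/2) * (u*Real.sqrt u)⁻¹ := by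
      rw [mul_inv]
      ring
    calc (u⁻¹ * Real.exp (-(a^2/(4*u)) - u*k^2)) * (Real.sqrt (π/u)/2 * Real.exp (-(x^2/(4*u))))
        = (u⁻¹ * (Real.sqrt (π/u)/2)) * (Real.exp (-(a^2/(4*u)) - u*k^2)
            * Real.exp (-(x^2/(4*u)))) := by ring
      _ = (u⁻¹ * (Real.sqrt π / Real.sqrt u / 2)) * Real.exp (-((ρ/2)^2/u) - k^2*u) := by
          rw [hsqu, hexpc]
      _ = (Real.sqrt π / 2) * ((u * Real.sqrt u)⁻¹ * Real.exp (-((ρ/2)^2/u) - k^2*u)) := by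
          rw [hscal]; ring
  have step4 : ∫ u in Ioi (0:ℝ), ∫ ξ in Ioi (0:ℝ), F ξ u
      = (Real.sqrt π/2) * (Real.sqrt π / (ρ/2) * Real.exp (-(2*(ρ/2)*k))) := by
    rw [setIntegral_congr_fun measurableSet_Ioi step3, integral_const_mul,
      keyD (by positivity : (0:ℝ) < ρ/2) hk]
  rw [step1, step2, step4, show -(2*(ρ/2)*k) = -(k*ρ) by ring]
  have hss : Real.sqrt π * Real.sqrt π = π := Real.mul_self_sqrt Real.pi_pos.le
  have hpi := Real.pi_pos
  field_simp
  linear_combination hss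
end

section
/- The drag inflow integral: with F = D e_x, Q_ψ = (D/(4πρ₀U)) ∫_{ℝ²} [(k r² + k r x + x)/r³] e^{-k(r-x)} dy dz = D/(ρ₀U) for any fixed x > 0, where r = sqrt(x²+y²+z²). -/
open MeasureTheory Real Filter Set

lemma radial_integral (k x : ℝ) (hk : 0 < k) (hx : 0 < x) :
    (∫ s in Set.Ioi (0:ℝ), s *
      (((k * Real.sqrt (x ^ 2 + s ^ 2) ^ 2 + k * Real.sqrt (x ^ 2 + s ^ 2) * x + x) /
          Real.sqrt (x ^ 2 + s ^ 2) ^ 3) *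
        Real.exp (-(k * (Real.sqrt (x ^ 2 + s ^ 2) - x))))) = 2 := by
  set H : ℝ → ℝ := fun s => -(1 + x / Real.sqrt (x ^ 2 + s ^ 2)) *
      Real.exp (-(k * (Real.sqrt (x ^ 2 + s ^ 2) - x))) with hH
  have husq : ∀ s : ℝ, Real.sqrt (x ^ 2 + s ^ 2) ^ 2 = x ^ 2 + s ^ 2 := by
    intro s; rw [Real.sq_sqrt]; positivity
  have hupos : ∀ s : ℝ, 0 < Real.sqrt (x ^ 2 + s ^ 2) := by
    intro s; apply Real.sqrt_pos.2; positivity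
  have hderiv : ∀ s : ℝ, HasDerivAt H
      (s * (((k * Real.sqrt (x ^ 2 + s ^ 2) ^ 2 + k * Real.sqrt (x ^ 2 + s ^ 2) * x + x) /
          Real.sqrt (x ^ 2 + s ^ 2) ^ 3) *
        Real.exp (-(k * (Real.sqrt (x ^ 2 + s ^ 2) - x))))) s := by
    intro s
    set u := Real.sqrt (x ^ 2 + s ^ 2) with hu
    have hu0 : u ≠ 0 := (hupos s).ne'
    have hU : HasDerivAt (fun t : ℝ => Real.sqrt (x ^ 2 + t ^ 2)) (s / u) s := by
      have h1 : HasDerivAt (fun t : ℝ => x ^ 2 + t ^ 2) (2 * s) s := by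
        simpa using (hasDerivAt_pow 2 s).const_add (x ^ 2)
      have := h1.sqrt (by positivity)
      convert this using 1
      field_simp [← hu]
      ring
    have hA : HasDerivAt (fun t : ℝ => -(1 + x / Real.sqrt (x ^ 2 + t ^ 2)))
        (x * (s / u) / u ^ 2) s := by
      have := ((hasDerivAt_const s x).div hU hu0).const_add 1
      refine this.neg.congr_deriv ?_
      rw [← hu]
      ring
    have hB : HasDerivAt (fun t : ℝ => Real.exp (-(k * (Real.sqrt (x ^ 2 + t ^ 2) - x))))
        (-(k * (s / u)) * Real.exp (-(k * (u - x)))) s := by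
      have hin : HasDerivAt (fun t : ℝ => -(k * (Real.sqrt (x ^ 2 + t ^ 2) - x)))
          (-(k * (s / u))) s := ((hU.sub_const x).const_mul k).neg
      convert hin.exp using 1
      rw [hu]
      ring
    have := hA.mul hB
    refine this.congr_deriv ?_
    have h2 : u ^ 2 = x ^ 2 + s ^ 2 := husq s
    rw [← hu]
    field_simp
    ring
  have hnneg : ∀ s ∈ Set.Ioi (0:ℝ), 0 ≤ s *
      (((k * Real.sqrt (x ^ 2 + s ^ 2) ^ 2 + k * Real.sqrt (x ^ 2 + s ^ 2) * x + x) /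
          Real.sqrt (x ^ 2 + s ^ 2) ^ 3) *
        Real.exp (-(k * (Real.sqrt (x ^ 2 + s ^ 2) - x)))) := by
    intro s hs
    have h1 : (0:ℝ) < s := hs
    have h2 := (hupos s).le
    positivity
  have htend : Tendsto H atTop (nhds 0) := by
    have h1 : Tendsto (fun s : ℝ => Real.sqrt (x ^ 2 + s ^ 2)) atTop atTop := by
      apply tendsto_atTop_mono (fun s => ?_) tendsto_id
      rcases le_or_gt s 0 with h | h
      · exact h.trans (Real.sqrt_nonneg _)
      · exact (Real.le_sqrt h.le (by positivity)).2 (by nlinarith)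
    have h2 : Tendsto (fun r : ℝ => -(1 + x / r) * Real.exp (-(k * (r - x)))) atTop (nhds 0) := by
      have ha : Tendsto (fun r : ℝ => -(1 + x / r)) atTop (nhds (-(1 + 0))) :=
        (tendsto_const_nhds.add (tendsto_const_nhds.div_atTop tendsto_id)).neg
      have hb : Tendsto (fun r : ℝ => Real.exp (-(k * (r - x)))) atTop (nhds 0) := by
        apply Real.tendsto_exp_atBot.comp
        have : Tendsto (fun r : ℝ => k * (r - x)) atTop atTop :=
          (tendsto_atTop_add_const_right _ (-x) tendsto_id).const_mul_atTop hk
        exact tendsto_neg_atTop_atBot.comp this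
      simpa using ha.mul hb
    exact h2.comp h1
  have key := integral_Ioi_of_hasDerivAt_of_nonneg' (g := H)
    (fun s _ => hderiv s) hnneg htend
  rw [key, hH]
  have : Real.sqrt (x ^ 2 + 0 ^ 2) = x := by
    rw [show x ^ 2 + (0:ℝ) ^ 2 = x ^ 2 by ring, Real.sqrt_sq hx.le]
  simp only [this]
  rw [div_self hx.ne']
  norm_num

/-- the drag inflow integral: with `F = D e_x`,
`Q_ψ = (D/(4πρ₀U)) ∫_{ℝ²} [(k r² + k r x + x)/r³] e^{-k(r-x)} dy dz = D/(ρ₀U)`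
for any fixed `x > 0`, where `r = √(x²+y²+z²)`. -/
theorem statement12 (k ρ₀ U D x : ℝ) (hk : 0 < k) (hρ : 0 < ρ₀) (hU : 0 < U)
    (hx : 0 < x) :
    (D / (4 * Real.pi * ρ₀ * U)) *
      (∫ p : ℝ × ℝ,
        ((k * Real.sqrt (x ^ 2 + p.1 ^ 2 + p.2 ^ 2) ^ 2 +
            k * Real.sqrt (x ^ 2 + p.1 ^ 2 + p.2 ^ 2) * x + x) /
          Real.sqrt (x ^ 2 + p.1 ^ 2 + p.2 ^ 2) ^ 3) *
        Real.exp (-(k * (Real.sqrt (x ^ 2 + p.1 ^ 2 + p.2 ^ 2) - x)))) =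
    D / (ρ₀ * U) := by
  have hmain : (∫ p : ℝ × ℝ,
        ((k * Real.sqrt (x ^ 2 + p.1 ^ 2 + p.2 ^ 2) ^ 2 +
            k * Real.sqrt (x ^ 2 + p.1 ^ 2 + p.2 ^ 2) * x + x) /
          Real.sqrt (x ^ 2 + p.1 ^ 2 + p.2 ^ 2) ^ 3) *
        Real.exp (-(k * (Real.sqrt (x ^ 2 + p.1 ^ 2 + p.2 ^ 2) - x)))) = 4 * Real.pi := by
    rw [← integral_comp_polarCoord_symm]
    have hcongr : (∫ p in polarCoord.target, p.1 •
        (((k * Real.sqrt (x ^ 2 + (polarCoord.symm p).1 ^ 2 + (polarCoord.symm p).2 ^ 2) ^ 2 +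
            k * Real.sqrt (x ^ 2 + (polarCoord.symm p).1 ^ 2 + (polarCoord.symm p).2 ^ 2) * x + x) /
          Real.sqrt (x ^ 2 + (polarCoord.symm p).1 ^ 2 + (polarCoord.symm p).2 ^ 2) ^ 3) *
        Real.exp (-(k * (Real.sqrt (x ^ 2 + (polarCoord.symm p).1 ^ 2 + (polarCoord.symm p).2 ^ 2) - x))))) =
        ∫ p in polarCoord.target, (fun r : ℝ => r *
          (((k * Real.sqrt (x ^ 2 + r ^ 2) ^ 2 + k * Real.sqrt (x ^ 2 + r ^ 2) * x + x) /
            Real.sqrt (x ^ 2 + r ^ 2) ^ 3) *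
          Real.exp (-(k * (Real.sqrt (x ^ 2 + r ^ 2) - x))))) p.1 * (fun _ : ℝ => (1:ℝ)) p.2 := by
      apply setIntegral_congr_fun polarCoord.open_target.measurableSet
      intro p _
      have hsq : (polarCoord.symm p).1 ^ 2 + (polarCoord.symm p).2 ^ 2 = p.1 ^ 2 := by
        simp only [polarCoord_symm_apply]
        have := Real.sin_sq_add_cos_sq p.2
        ring_nf
        nlinarith [Real.sin_sq_add_cos_sq p.2]
      simp only [smul_eq_mul, mul_one]
      rw [show x ^ 2 + (polarCoord.symm p).1 ^ 2 + (polarCoord.symm p).2 ^ 2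
          = x ^ 2 + p.1 ^ 2 by rw [add_assoc, hsq]]
    rw [hcongr, polarCoord_target, Measure.volume_eq_prod]
    have hsplit := MeasureTheory.setIntegral_prod_mul (μ := volume) (ν := volume)
        (f := fun r : ℝ => r * (((k * Real.sqrt (x ^ 2 + r ^ 2) ^ 2 +
            k * Real.sqrt (x ^ 2 + r ^ 2) * x + x) / Real.sqrt (x ^ 2 + r ^ 2) ^ 3) *
          Real.exp (-(k * (Real.sqrt (x ^ 2 + r ^ 2) - x)))))
        (g := fun _ : ℝ => (1:ℝ)) (s := Set.Ioi (0:ℝ)) (t := Set.Ioo (-Real.pi) Real.pi)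
    beta_reduce at hsplit ⊢
    rw [hsplit, radial_integral k x hk hx]
    simp only [integral_const, smul_eq_mul, mul_one, MeasurableSet.univ,
      Measure.restrict_apply, Set.univ_inter, Real.volume_Ioo]
    rw [Measure.real_def, Measure.restrict_apply MeasurableSet.univ, Set.univ_inter, Real.volume_Ioo,
      ENNReal.toReal_ofReal (by linarith [Real.pi_pos] : (0:ℝ) ≤ Real.pi - -Real.pi)]
    ring
  rw [hmain]
  have hπ : Real.pi ≠ 0 := Real.pi_ne_zero
  field_simp
end
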